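/- arXiv:1608.05669 — 2 statements merged into one kernel-verified Lean document; each statement's English description precedes it below -/
import Mathlib

section
/- Let f₁, ..., fₙ ∈ k[x₁,...,xₙ] generate an ideal I such that k[x₁,...,xₙ]_{m₀}/I has finite length, where m₀ = (x₁,...,xₙ). Then there exists b > 0 such that m₀^b ⊆ I·k[x₁,...,xₙ]_{m₀}, and for any g₁,...,gₙ with fᵢ − gᵢ ∈ m₀^{b+1} for all i, the ideals (f₁,...,fₙ) and (g₁,...,gₙ) in the localization k[x₁,...,xₙ]_{m₀} are equal. -/
open MvPolynomial

set_option maxHeartbeats 1000000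
set_option synthInstance.maxHeartbeats 400000

/-- Auxiliary general version over an arbitrary commutative ring. -/
theorem stmt2_aux {P : Type*} [CommRing P] {n : ℕ} (f : Fin n → P)
    (m₀ : Ideal P) [hp : m₀.IsPrime] :
    IsFiniteLength (Localization m₀.primeCompl)
      (Localization m₀.primeCompl ⧸
        Ideal.map (algebraMap P (Localization m₀.primeCompl)) (Ideal.span (Set.range f))) →
    ∃ b : ℕ, 0 < b ∧
      Ideal.map (algebraMap P (Localization m₀.primeCompl)) (m₀ ^ b) ≤
        Ideal.map (algebraMap P (Localization m₀.primeCompl)) (Ideal.span (Set.range f)) ∧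
      ∀ g : Fin n → P,
        (∀ i, f i - g i ∈ m₀ ^ (b + 1)) →
        Ideal.map (algebraMap P (Localization m₀.primeCompl)) (Ideal.span (Set.range f)) =
          Ideal.map (algebraMap P (Localization m₀.primeCompl)) (Ideal.span (Set.range g)) := by
  intro hfl
  set R := Localization m₀.primeCompl with hR
  set φ := algebraMap P R with hφ
  haveI : IsLocalRing R := Localization.AtPrime.isLocalRing m₀
  set M := IsLocalRing.maximalIdeal R with hM
  set N := Ideal.map φ m₀ with hN
  set I := Ideal.map φ (Ideal.span (Set.range f)) with hI
  -- I is finitely generated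
  have hIfg : I.FG := by
    rw [hI, Ideal.map_span]
    exact Submodule.fg_span ((Set.finite_range f).image _)
  -- the image of m₀ lands in the maximal ideal
  have hNM : N ≤ M :=
    Ideal.map_le_iff_le_comap.mpr fun x hx =>
      (IsLocalization.AtPrime.to_map_mem_maximal_iff R m₀ x).mpr hx
  -- the maximal ideal is the Jacobson radical of ⊥
  have hMjac : M ≤ Ideal.jacobson (⊥ : Ideal R) :=
    (IsLocalRing.jacobson_eq_maximalIdeal (⊥ : Ideal R) bot_ne_top).ge
  -- the quotient is an Artinian ring
  haveI hart : IsArtinian R (R ⧸ I) := (isFiniteLength_iff_isNoetherian_isArtinian.mp hfl).2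
  haveI : IsArtinianRing (R ⧸ I) := isArtinian_of_tower R hart
  obtain ⟨c, hc⟩ := IsArtinianRing.isNilpotent_jacobson_bot (R := R ⧸ I)
  -- the image of M in the quotient is inside the Jacobson radical
  have hMj : Ideal.map (Ideal.Quotient.mk I) M ≤ Ideal.jacobson (⊥ : Ideal (R ⧸ I)) := by
    refine le_sInf ?_
    rintro J ⟨-, hJ⟩
    haveI := hJ
    have hcm := Ideal.comap_isMaximal_of_surjective (Ideal.Quotient.mk I)
      Ideal.Quotient.mk_surjective (K := J)
    rw [Ideal.map_le_iff_le_comap, IsLocalRing.eq_maximalIdeal hcm]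
  -- so some power of M is in I
  have hMk : M ^ c ≤ I := by
    have h1 : Ideal.map (Ideal.Quotient.mk I) (M ^ c) ≤ ⊥ := by
      rw [Ideal.map_pow]
      calc Ideal.map (Ideal.Quotient.mk I) M ^ c
          ≤ Ideal.jacobson (⊥ : Ideal (R ⧸ I)) ^ c := Ideal.pow_right_mono hMj c
        _ = ⊥ := hc.trans (Ideal.zero_eq_bot)
    have h2 := Ideal.map_le_iff_le_comap.mp h1
    rwa [← RingHom.ker_eq_comap_bot, Ideal.mk_ker] at h2
  have hbI : Ideal.map φ (m₀ ^ (c + 1)) ≤ I := by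
    calc Ideal.map φ (m₀ ^ (c + 1)) = N ^ (c + 1) := Ideal.map_pow φ m₀ (c + 1)
      _ ≤ M ^ (c + 1) := Ideal.pow_right_mono hNM _
      _ ≤ M ^ c := Ideal.pow_le_pow_right (Nat.le_succ c)
      _ ≤ I := hMk
  refine ⟨c + 1, Nat.succ_pos c, hbI, ?_⟩
  intro g hg
  -- the differences map into M • I
  have hdiff : ∀ i, φ (f i - g i) ∈ M • I := by
    intro i
    have h1 : φ (f i - g i) ∈ Ideal.map φ (m₀ ^ (c + 1 + 1)) :=
      Ideal.mem_map_of_mem φ (hg i)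
    have h2 : Ideal.map φ (m₀ ^ (c + 1 + 1)) ≤ M • I := by
      rw [Ideal.map_pow, Ideal.smul_eq_mul, pow_succ']
      exact Ideal.mul_mono hNM
        (le_trans (le_of_eq (Ideal.map_pow φ m₀ (c + 1)).symm) hbI)
    exact h2 h1
  -- J ≤ I
  have hJI : Ideal.map φ (Ideal.span (Set.range g)) ≤ I := by
    rw [Ideal.map_span, Ideal.span_le]
    rintro _ ⟨_, ⟨i, rfl⟩, rfl⟩
    have h1 : φ (f i) ∈ I :=
      Ideal.mem_map_of_mem φ (Ideal.subset_span ⟨i, rfl⟩)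
    have h2 : φ (f i - g i) ∈ I :=
      (by have h := hdiff i; rw [Ideal.smul_eq_mul] at h; exact (Submodule.mem_inf.mp (Ideal.mul_le_inf h)).2)
    have h3 : φ (g i) = φ (f i) - φ (f i - g i) := by
      rw [map_sub]; ring
    rw [SetLike.mem_coe, h3]
    exact Ideal.sub_mem I h1 h2
  -- I ≤ J ⊔ M • I
  have hIJM : I ≤ Ideal.map φ (Ideal.span (Set.range g)) ⊔ M • I := by
    conv_lhs => rw [hI, Ideal.map_span]
    rw [Ideal.span_le]
    rintro _ ⟨_, ⟨i, rfl⟩, rfl⟩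
    have h1 : φ (g i) ∈ Ideal.map φ (Ideal.span (Set.range g)) ⊔ M • I :=
      Ideal.mem_sup_left (Ideal.mem_map_of_mem φ (Ideal.subset_span ⟨i, rfl⟩))
    have h2 : φ (f i - g i) ∈ Ideal.map φ (Ideal.span (Set.range g)) ⊔ M • I :=
      Ideal.mem_sup_right (hdiff i)
    have h3 : φ (f i) = φ (g i) + φ (f i - g i) := by
      rw [map_sub]; ring
    rw [SetLike.mem_coe, h3]
    exact Ideal.add_mem _ h1 h2
  -- Nakayama
  exact le_antisymm
    (Submodule.le_of_le_smul_of_le_jacobson_bot hIfg hMjac hIJM) hJI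

/-- finite determinacy of the ideal. If `Q₀(f) = P_{m₀}/(f₁,...,fₙ)` has
finite length, then there exists `b > 0` with `m₀^b ⊆ I` in the localization, and any
`g` with `fᵢ − gᵢ ∈ m₀^{b+1}` generates the same ideal as `f` in the localization. -/
theorem stmt2 {k : Type*} [Field k] {n : ℕ}
    (f : Fin n → MvPolynomial (Fin n) k)
    (m₀ : Ideal (MvPolynomial (Fin n) k))
    (hm₀ : m₀ = Ideal.span (Set.range MvPolynomial.X))
    (hp : m₀.IsPrime) :
    letI R := Localization (Ideal.primeCompl m₀ (hp := hp))
    letI φ := algebraMap (MvPolynomial (Fin n) k) R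
    IsFiniteLength R (R ⧸ Ideal.map φ (Ideal.span (Set.range f))) →
    ∃ b : ℕ, 0 < b ∧
      Ideal.map φ (m₀ ^ b) ≤ Ideal.map φ (Ideal.span (Set.range f)) ∧
      ∀ g : Fin n → MvPolynomial (Fin n) k,
        (∀ i, f i - g i ∈ m₀ ^ (b + 1)) →
        Ideal.map φ (Ideal.span (Set.range f)) = Ideal.map φ (Ideal.span (Set.range g)) := by
  haveI := hp
  exact stmt2_aux f m₀
end

section
/- Let k be a field of characteristic ≠ 2 and n an even positive integer. Suppose f, g ∈ k[[x₁,...,xₙ]] both vanish at 0 and define nodes at the origin, and there is a k-algebra isomorphism φ of k[[x₁,...,xₙ]] and a unit u with f = u · (g ∘ φ). Then the Hessian determinants satisfy det(∂²f/∂xᵢ∂xⱼ)(0) = u(0)ⁿ · det(Dφ(0))² · det(∂²g/∂xᵢ∂xⱼ)(0); in particular, since n is even, the two Hessian determinants differ by a square in k*, and hence ⟨det Hess f(0)⟩ = ⟨det Hess g(0)⟩ in GW(k). -/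
open MvPowerSeries

open Finsupp

namespace Stmt13Aux

variable {σ : Type*} [DecidableEq σ]

lemma degree_add (a b : σ →₀ ℕ) : degree (a + b) = degree a + degree b := by
  simp [degree_eq_weight_one, map_add]

lemma degree_single (a : σ) (m : ℕ) : degree (single a m) = m := by
  classical
  simp [degree_eq_weight_one, weight_apply, Finsupp.sum_single_index]

lemma eq_single_of_degree_one {d : σ →₀ ℕ} (h : degree d = 1) :
    ∃ a, d = single a 1 := by
  have h0 : d ≠ 0 := by
    intro h'; rw [h', map_zero] at h; exact one_ne_zero h.symm
  obtain ⟨a, ha⟩ := Finsupp.ne_iff.mp h0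
  simp only [coe_zero, Pi.zero_apply] at ha
  refine ⟨a, ?_⟩
  ext j
  have hda : d a ≤ 1 := h ▸ le_degree a d
  have hda1 : d a = 1 := le_antisymm hda (Nat.one_le_iff_ne_zero.mpr ha)
  rcases eq_or_ne j a with rfl | hj
  · simpa [hda1] using (single_eq_same (a := j) (b := 1)).symm
  · rw [single_eq_of_ne' (Ne.symm hj)]
    -- d j = 0 since degree is 1 and d a = 1
    by_contra hdj
    have hj1 : 1 ≤ d j := Nat.one_le_iff_ne_zero.mpr hdj
    have : 2 ≤ degree d := by
      have hsub : ({a, j} : Finset σ) ⊆ d.support := by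
        intro x hx
        simp only [Finset.mem_insert, Finset.mem_singleton] at hx
        rcases hx with rfl | rfl <;> simp [Finsupp.mem_support_iff, ha, hdj]
      calc 2 ≤ d a + d j := by omega
        _ = ∑ x ∈ ({a, j} : Finset σ), d x := (Finset.sum_pair hj.symm).symm
        _ ≤ ∑ x ∈ d.support, d x := Finset.sum_le_sum_of_subset hsub
    omega
  done

lemma eq_pair_of_degree_two {d : σ →₀ ℕ} (h : degree d = 2) :
    ∃ a b, d = single a 1 + single b 1 := by
  have h0 : d ≠ 0 := by
    intro h'; rw [h', map_zero] at h; simp at h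
  obtain ⟨a, ha⟩ := Finsupp.ne_iff.mp h0
  simp only [coe_zero, Pi.zero_apply] at ha
  have h1 : 1 ≤ d a := Nat.one_le_iff_ne_zero.mpr ha
  set d' := d - single a 1 with hd'
  have hd : d = single a 1 + d' := by
    ext j
    rcases eq_or_ne j a with rfl | hj
    · simp [hd', tsub_apply]; omega
    · simp [hd', tsub_apply, single_eq_of_ne' (Ne.symm hj)]
  have hdeg' : degree d' = 1 := by
    have := degree_add (single a 1) d'
    rw [← hd, h, degree_single] at this
    omega
  obtain ⟨b, hb⟩ := eq_single_of_degree_one hdeg'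
  exact ⟨a, b, by rw [hd, hb]⟩

end Stmt13Aux

namespace Stmt13Aux

set_option linter.unusedSectionVars false

section Cancel
variable {σ : Type*} [DecidableEq σ]

lemma single_add_single_cases {a b i j : σ}
    (h : single i 1 + single j 1 = single a 1 + single b 1) :
    (i = a ∧ j = b) ∨ (i = b ∧ j = a) := by
  have hi : i = a ∨ i = b := by
    by_contra hc
    push_neg at hc
    have := congrFun (congrArg (fun f : σ →₀ ℕ => (f : σ → ℕ)) h) i
    simp [single_apply, hc.1, hc.2, Ne.symm hc.1, Ne.symm hc.2] at this
  rcases hi with rfl | rfl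
  · left
    refine ⟨rfl, ?_⟩
    have h' : single j 1 = single b 1 := add_left_cancel h
    exact (Finsupp.single_left_injective one_ne_zero h')
  · right
    refine ⟨rfl, ?_⟩
    rw [add_comm (single i 1) (single j 1)] at h
    have h' : single j 1 = single a 1 := add_right_cancel h
    exact (Finsupp.single_left_injective one_ne_zero h')

lemma add_eq_single_add_single_cases {a b : σ} {d₁ d₂ : σ →₀ ℕ}
    (h : d₁ + d₂ = single a 1 + single b 1) :
    (d₁ = 0) ∨ (d₂ = 0) ∨
      (d₁ = single a 1 ∧ d₂ = single b 1) ∨ (d₁ = single b 1 ∧ d₂ = single a 1) := by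
  have hdeg : degree d₁ + degree d₂ = 2 := by
    have := congrArg degree h
    rw [degree_add, degree_add, degree_single, degree_single] at this
    omega
  have h3 : degree d₁ = 0 ∨ degree d₁ = 1 ∨ degree d₁ = 2 := by omega
  rcases h3 with h1 | h1 | h1
  · exact Or.inl ((degree_eq_zero_iff d₁).mp h1)
  · have h2 : degree d₂ = 1 := by omega
    obtain ⟨c, rfl⟩ := eq_single_of_degree_one h1
    obtain ⟨c', rfl⟩ := eq_single_of_degree_one h2
    rcases single_add_single_cases h with ⟨rfl, rfl⟩ | ⟨rfl, rfl⟩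
    · exact Or.inr (Or.inr (Or.inl ⟨rfl, rfl⟩))
    · exact Or.inr (Or.inr (Or.inr ⟨rfl, rfl⟩))
  · have h2 : degree d₂ = 0 := by omega
    exact Or.inr (Or.inl ((degree_eq_zero_iff d₂).mp h2))

end Cancel

end Stmt13Aux

namespace Stmt13Aux

set_option linter.unusedSectionVars false

section Ideal

open scoped Classical

variable {σ : Type*} [DecidableEq σ] {R : Type*} [CommRing R]

lemma vanish_of_mem_pow {N : ℕ} :
    ∀ {x : MvPowerSeries σ R}, x ∈ (RingHom.ker (MvPowerSeries.constantCoeff (σ := σ) (R := R))) ^ N →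
      ∀ {d : σ →₀ ℕ}, degree d < N → MvPowerSeries.coeff d x = 0 := by
  induction N with
  | zero => intro x _ d hd; omega
  | succ N ih =>
    intro x hx
    rw [pow_succ] at hx
    suffices H : ∀ d : σ →₀ ℕ, degree d < N + 1 → MvPowerSeries.coeff d x = 0 by
      intro d hd; exact H d hd
    refine Submodule.mul_induction_on hx (fun m hm y hy => ?_) (fun a b ha hb => ?_)
    · intro d hd
      rw [MvPowerSeries.coeff_mul]
      apply Finset.sum_eq_zero
      rintro ⟨p₁, p₂⟩ hp
      rw [Finset.HasAntidiagonal.mem_antidiagonal] at hp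
      rcases eq_or_ne p₂ 0 with rfl | hp2
      · have hy0 : MvPowerSeries.coeff 0 y = 0 := by
          rw [MvPowerSeries.coeff_zero_eq_constantCoeff_apply]
          exact RingHom.mem_ker.mp hy
        simp [hy0]
      · have hdeg : degree p₁ + degree p₂ = degree d := by
          rw [← hp, degree_add]
        have hp2' : degree p₂ ≠ 0 := fun hc => hp2 ((degree_eq_zero_iff p₂).mp hc)
        have h1 : degree p₁ < N := by omega
        simp [ih hm h1]
    · intro d hd
      simp [map_add, ha d hd, hb d hd]

/-- division-with-marker used to decompose a power series with zero constant term -/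
noncomputable def shiftF [LinearOrder σ] (i : σ) (h : MvPowerSeries σ R) :
    MvPowerSeries σ R :=
  fun d => if ∀ j, j < i → d j = 0 then MvPowerSeries.coeff (d + single i 1) h else 0

lemma coeff_shiftF [LinearOrder σ] (i : σ) (h : MvPowerSeries σ R) (d : σ →₀ ℕ) :
    MvPowerSeries.coeff d (shiftF i h) =
      if ∀ j, j < i → d j = 0 then MvPowerSeries.coeff (d + single i 1) h else 0 := by
  rw [MvPowerSeries.coeff_apply]
  rfl

lemma decompose [LinearOrder σ] [Fintype σ] (h : MvPowerSeries σ R)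
    (hh : MvPowerSeries.constantCoeff (σ := σ) (R := R) h = 0) :
    h = ∑ i : σ, MvPowerSeries.X i * shiftF i h := by
  apply MvPowerSeries.ext
  intro d
  rw [map_sum]
  have hX : ∀ (i : σ) (s : MvPowerSeries σ R),
      MvPowerSeries.coeff d (MvPowerSeries.X i * s) =
        if single i 1 ≤ d then MvPowerSeries.coeff (d - single i 1) s else 0 := by
    intro i s
    rw [show (MvPowerSeries.X i : MvPowerSeries σ R) = MvPowerSeries.monomial (single i 1) 1
      from rfl, MvPowerSeries.coeff_monomial_mul]
    simp
  rcases eq_or_ne d 0 with rfl | hd0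
  · rw [MvPowerSeries.coeff_zero_eq_constantCoeff_apply, hh]
    symm; apply Finset.sum_eq_zero
    intro i _
    rw [hX, if_neg (fun hle => by simpa using Finsupp.single_le_iff.mp hle)]
  · have hne : d.support.Nonempty := Finsupp.support_nonempty_iff.mpr hd0
    set i₀ := d.support.min' hne with hi₀
    have hi₀mem : d i₀ ≠ 0 := Finsupp.mem_support_iff.mp (d.support.min'_mem hne)
    have hle₀ : single i₀ 1 ≤ d := Finsupp.single_le_iff.mpr (Nat.one_le_iff_ne_zero.mpr hi₀mem)
    have hmin : ∀ j, j < i₀ → d j = 0 := by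
      intro j hj
      by_contra hc
      exact absurd (d.support.min'_le j (Finsupp.mem_support_iff.mpr hc)) (not_le.mpr hj)
    rw [Finset.sum_eq_single i₀]
    · rw [hX, if_pos hle₀, coeff_shiftF, if_pos, tsub_add_cancel_of_le hle₀]
      intro j hj
      rw [tsub_apply]
      simp [hmin j hj]
    · intro i _ hii
      rw [hX]
      by_cases hle : single i 1 ≤ d
      · rw [if_pos hle, coeff_shiftF, if_neg]
        push_neg
        refine ⟨i₀, ?_, ?_⟩
        · have hi : d i ≠ 0 := by
            have := Finsupp.single_le_iff.mp hle; omega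
          have h1 : i₀ ≤ i := d.support.min'_le i (Finsupp.mem_support_iff.mpr hi)
          exact lt_of_le_of_ne h1 (Ne.symm hii)
        · rw [tsub_apply, Finsupp.single_eq_of_ne' hii]
          simpa using hi₀mem
      · rw [if_neg hle]
    · intro hni₀; exact absurd (Finset.mem_univ i₀) hni₀

lemma mem_pow_of_vanish [LinearOrder σ] [Fintype σ] (N : ℕ) :
    ∀ (h : MvPowerSeries σ R), (∀ d : σ →₀ ℕ, degree d < N → MvPowerSeries.coeff d h = 0) →
      h ∈ (RingHom.ker (MvPowerSeries.constantCoeff (σ := σ) (R := R))) ^ N := by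
  induction N with
  | zero => intro h _; simp
  | succ N ih =>
    intro h hcoeff
    have hc0 : MvPowerSeries.constantCoeff (σ := σ) (R := R) h = 0 := by
      have := hcoeff 0 (by rw [map_zero]; omega)
      rwa [MvPowerSeries.coeff_zero_eq_constantCoeff_apply] at this
    rw [decompose h hc0]
    apply Submodule.sum_mem
    intro i _
    rw [pow_succ']
    apply Ideal.mul_mem_mul
    · exact RingHom.mem_ker.mpr (MvPowerSeries.constantCoeff_X i)
    · apply ih
      intro d hd
      rw [coeff_shiftF]
      split
      · apply hcoeff
        rw [degree_add, degree_single]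
        omega
      · rfl

end Ideal

end Stmt13Aux

namespace Stmt13Aux

set_option linter.unusedSectionVars false

section Field

variable {σ : Type*} [DecidableEq σ] {k : Type*} [Field k]

lemma map_ker_pow (φ : MvPowerSeries σ k ≃ₐ[k] MvPowerSeries σ k) (N : ℕ)
    {x : MvPowerSeries σ k}
    (hx : x ∈ (RingHom.ker (MvPowerSeries.constantCoeff (σ := σ) (R := k))) ^ N) :
    φ x ∈ (RingHom.ker (MvPowerSeries.constantCoeff (σ := σ) (R := k))) ^ N := by
  set J := RingHom.ker (MvPowerSeries.constantCoeff (σ := σ) (R := k)) with hJ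
  have hmap : Ideal.map (φ : MvPowerSeries σ k →+* MvPowerSeries σ k) J ≤ J := by
    rw [Ideal.map_le_iff_le_comap]
    intro a ha
    rw [hJ, RingHom.mem_ker] at ha
    rw [Ideal.mem_comap, hJ, RingHom.mem_ker]
    by_contra hc
    have hunit : IsUnit (φ a) :=
      MvPowerSeries.isUnit_iff_constantCoeff.mpr (isUnit_iff_ne_zero.mpr hc)
    have huA : IsUnit (φ.symm (φ a)) := hunit.map (φ.symm : MvPowerSeries σ k →+* MvPowerSeries σ k)
    rw [AlgEquiv.symm_apply_apply] at huA
    rw [MvPowerSeries.isUnit_iff_constantCoeff, ha] at huA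
    exact not_isUnit_zero huA
  have h1 : φ x ∈ Ideal.map (φ : MvPowerSeries σ k →+* MvPowerSeries σ k) (J ^ N) :=
    Ideal.mem_map_of_mem _ hx
  rw [Ideal.map_pow] at h1
  exact Ideal.pow_right_mono hmap N h1

lemma coeff_two_mul (P Q : MvPowerSeries σ k)
    (hP : MvPowerSeries.constantCoeff (σ := σ) (R := k) P = 0)
    (hQ : MvPowerSeries.constantCoeff (σ := σ) (R := k) Q = 0) (a b : σ) :
    (if a = b then (2 : k) else 1) *
        MvPowerSeries.coeff (single a 1 + single b 1) (P * Q) =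
      MvPowerSeries.coeff (single a 1) P * MvPowerSeries.coeff (single b 1) Q +
        MvPowerSeries.coeff (single b 1) P * MvPowerSeries.coeff (single a 1) Q := by
  classical
  rw [MvPowerSeries.coeff_mul]
  set T : Finset ((σ →₀ ℕ) × (σ →₀ ℕ)) :=
    {(single a 1, single b 1), (single b 1, single a 1)} with hT
  have hTsub : T ⊆ Finset.HasAntidiagonal.antidiagonal (single a 1 + single b 1) := by
    intro p hp
    rw [hT, Finset.mem_insert, Finset.mem_singleton] at hp
    rcases hp with rfl | rfl
    · rw [Finset.HasAntidiagonal.mem_antidiagonal]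
    · rw [Finset.HasAntidiagonal.mem_antidiagonal]; exact add_comm _ _
  have hzero : ∀ p ∈ Finset.HasAntidiagonal.antidiagonal (single a 1 + single b 1), p ∉ T →
      MvPowerSeries.coeff p.1 P * MvPowerSeries.coeff p.2 Q = 0 := by
    rintro ⟨p₁, p₂⟩ hp hpT
    rw [Finset.HasAntidiagonal.mem_antidiagonal] at hp
    rcases add_eq_single_add_single_cases hp with h | h | ⟨rfl, rfl⟩ | ⟨rfl, rfl⟩
    · subst h
      rw [MvPowerSeries.coeff_zero_eq_constantCoeff_apply, hP, zero_mul]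
    · subst h
      rw [MvPowerSeries.coeff_zero_eq_constantCoeff_apply, hQ, mul_zero]
    · exact absurd (by rw [hT]; exact Finset.mem_insert_self _ _) hpT
    · exact absurd (by rw [hT]; simp) hpT
  rw [← Finset.sum_subset hTsub (fun p hp hpT => hzero p hp hpT)]
  rcases eq_or_ne a b with rfl | hab
  · have : T = {(single a 1, single a 1)} := by rw [hT]; simp
    rw [this, Finset.sum_singleton, if_pos rfl]
    ring
  · have hne : ((single a 1, single b 1) : (σ →₀ ℕ) × (σ →₀ ℕ)) ≠ (single b 1, single a 1) := by
      intro hc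
      exact hab (Finsupp.single_left_injective one_ne_zero (congrArg Prod.fst hc))
    rw [hT, Finset.sum_pair hne, if_neg hab, one_mul]

lemma coeff_unit_mul (u s : MvPowerSeries σ k)
    (hs : ∀ d' : σ →₀ ℕ, degree d' < 2 → MvPowerSeries.coeff d' s = 0)
    (d : σ →₀ ℕ) (hd : degree d = 2) :
    MvPowerSeries.coeff d (u * s) =
      MvPowerSeries.constantCoeff (σ := σ) (R := k) u * MvPowerSeries.coeff d s := by
  classical
  rw [MvPowerSeries.coeff_mul]
  rw [Finset.sum_eq_single_of_mem ((0 : σ →₀ ℕ), d)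
    (by rw [Finset.HasAntidiagonal.mem_antidiagonal]; exact zero_add d)]
  · rw [MvPowerSeries.coeff_zero_eq_constantCoeff_apply]
  · rintro ⟨p₁, p₂⟩ hp hne
    rw [Finset.HasAntidiagonal.mem_antidiagonal] at hp
    have hp1 : p₁ ≠ 0 := by
      rintro rfl
      rw [zero_add] at hp
      simp only [Prod.mk.injEq] at hp ⊢
      exact hne (by simp [hp])
    have h1 : 1 ≤ degree p₁ :=
      Nat.one_le_iff_ne_zero.mpr (fun hc => hp1 ((degree_eq_zero_iff p₁).mp hc))
    have h2 : degree p₁ + degree p₂ = 2 := by rw [← degree_add, hp, hd]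
    rw [hs p₂ (by omega), mul_zero]

end Field

end Stmt13Aux

namespace Stmt13Aux

set_option linter.unusedSectionVars false

section Ind

variable {σ : Type*} [DecidableEq σ] [Fintype σ] {k : Type*} [Field k]

lemma double_sum_indicator_diag (c : σ → σ → k) (a : σ) :
    (∑ i : σ, ∑ j : σ,
      if single a 1 + single a 1 = single i 1 + single j 1 then c i j else 0) = c a a := by
  rw [Finset.sum_eq_single a]
  · rw [Finset.sum_eq_single a]
    · rw [if_pos rfl]
    · intro j _ hj
      rw [if_neg]
      intro hc
      rcases single_add_single_cases hc.symm with ⟨_, rfl⟩ | ⟨_, rfl⟩ <;> exact hj rfl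
    · intro h; exact absurd (Finset.mem_univ a) h
  · intro i _ hi
    apply Finset.sum_eq_zero
    intro j _
    rw [if_neg]
    intro hc
    rcases single_add_single_cases hc.symm with ⟨rfl, _⟩ | ⟨rfl, _⟩ <;> exact hi rfl
  · intro h; exact absurd (Finset.mem_univ a) h

lemma double_sum_indicator (c : σ → σ → k) {a b : σ} (hab : a ≠ b) :
    (∑ i : σ, ∑ j : σ,
      if single a 1 + single b 1 = single i 1 + single j 1 then c i j else 0)
        = c a b + c b a := by
  rw [← Finset.sum_product']
  set T : Finset (σ × σ) := {(a, b), (b, a)} with hT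
  have hTsub : T ⊆ Finset.univ ×ˢ Finset.univ := fun p _ => by simp
  rw [← Finset.sum_subset hTsub]
  · have hne : ((a, b) : σ × σ) ≠ (b, a) := fun hc => hab (congrArg Prod.fst hc)
    rw [hT, Finset.sum_pair hne, if_pos rfl, if_pos (add_comm _ _)]
  · rintro ⟨i, j⟩ _ hpT
    rw [if_neg]
    intro hc
    rcases single_add_single_cases hc.symm with ⟨rfl, rfl⟩ | ⟨rfl, rfl⟩
    · exact hpT (by rw [hT]; exact Finset.mem_insert_self _ _)
    · exact hpT (by rw [hT]; simp)

end Ind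

end Stmt13Aux

open Stmt13Aux

/-- char k ≠ 2, n even.  If f, g ∈ k[[x₁,...,xₙ]] define nodes at the
origin and f = u·(g∘φ) for a local change of coordinates φ (here realized as a
k-algebra automorphism of k[[x]] preserving the origin) and a unit u, then
det Hess f(0) = u(0)ⁿ · det(Dφ(0))² · det Hess g(0); in particular the two Hessian
determinants differ by a square of k*, so ⟨det Hess f(0)⟩ = ⟨det Hess g(0)⟩ in GW(k).
The Hessian matrix at 0 is (∂²h/∂xᵢ∂xⱼ)(0), i.e. the matrix of second partials
read off from the degree-2 coefficients of h. -/
theorem stmt13 {k : Type*} [Field k] (hchar : ringChar k ≠ 2)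
    {n : ℕ} (hn : Even n) (hnpos : 0 < n)
    (f g : MvPowerSeries (Fin n) k)
    -- Hessians at the origin
    (Hf Hg : Matrix (Fin n) (Fin n) k)
    (hHf : Hf = Matrix.of fun i j => (if i = j then (2 : k) else 1) *
      MvPowerSeries.coeff (Finsupp.single i 1 + Finsupp.single j 1) f)
    (hHg : Hg = Matrix.of fun i j => (if i = j then (2 : k) else 1) *
      MvPowerSeries.coeff (Finsupp.single i 1 + Finsupp.single j 1) g)
    -- f, g vanish at 0 together with their first derivatives, and define nodes
    (hf0 : MvPowerSeries.constantCoeff f = 0)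
    (hg0 : MvPowerSeries.constantCoeff g = 0)
    (hdf0 : ∀ i, MvPowerSeries.coeff (Finsupp.single i 1) f = 0)
    (hdg0 : ∀ i, MvPowerSeries.coeff (Finsupp.single i 1) g = 0)
    (hfnode : Hf.det ≠ 0) (hgnode : Hg.det ≠ 0)
    -- the change of coordinates φ and the unit u
    (φ : MvPowerSeries (Fin n) k ≃ₐ[k] MvPowerSeries (Fin n) k)
    (hφ0 : ∀ i, MvPowerSeries.constantCoeff (φ (MvPowerSeries.X i)) = 0)
    (Dφ0 : Matrix (Fin n) (Fin n) k)
    (hDφ0 : Dφ0 = Matrix.of fun i j =>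
      MvPowerSeries.coeff (Finsupp.single j 1) (φ (MvPowerSeries.X i)))
    (u : MvPowerSeries (Fin n) k) (hu : IsUnit u)
    (hfu : f = u * φ g) :
    Hf.det = (MvPowerSeries.constantCoeff u) ^ n * Dφ0.det ^ 2 * Hg.det ∧
      ∃ c : k, c ≠ 0 ∧ Hf.det = c ^ 2 * Hg.det := by
  classical
  have h2 : (2 : k) ≠ 0 := Ring.two_ne_zero hchar
  set u0 := MvPowerSeries.constantCoeff (σ := Fin n) (R := k) u with hu0
  have hA : ∀ (i a : Fin n),
      MvPowerSeries.coeff (single a 1) (φ (MvPowerSeries.X i)) = Dφ0 i a := by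
    intro i a; rw [hDφ0]; rfl
  -- low-degree vanishing criterion
  have hlow : ∀ (h : MvPowerSeries (Fin n) k),
      MvPowerSeries.constantCoeff (σ := Fin n) (R := k) h = 0 →
      (∀ i, MvPowerSeries.coeff (single i 1) h = 0) →
      ∀ d : Finsupp (Fin n) ℕ, degree d < 2 → MvPowerSeries.coeff d h = 0 := by
    intro h hc hl d hd
    have : degree d = 0 ∨ degree d = 1 := by omega
    rcases this with h1 | h1
    · rw [(degree_eq_zero_iff d).mp h1, MvPowerSeries.coeff_zero_eq_constantCoeff_apply, hc]
    · obtain ⟨a, rfl⟩ := eq_single_of_degree_one h1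
      exact hl a
  -- φ g has vanishing coefficients below degree 2
  have hgJ2 : g ∈ (RingHom.ker (MvPowerSeries.constantCoeff (σ := Fin n) (R := k))) ^ 2 :=
    mem_pow_of_vanish 2 g (hlow g hg0 hdg0)
  have hφg_vanish : ∀ d : Finsupp (Fin n) ℕ, degree d < 2 →
      MvPowerSeries.coeff d (φ g) = 0 :=
    fun d hd => vanish_of_mem_pow (map_ker_pow φ 2 hgJ2) hd
  -- the quadratic part q of g
  set q : MvPowerSeries (Fin n) k := ∑ i : Fin n, ∑ j : Fin n,
    (MvPowerSeries.C (σ := Fin n) (R := k) ((2 : k)⁻¹ * Hg i j)) *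
      (MvPowerSeries.X i * MvPowerSeries.X j) with hqdef
  have hXX : ∀ i j : Fin n, (MvPowerSeries.X i * MvPowerSeries.X j : MvPowerSeries (Fin n) k)
      = MvPowerSeries.monomial (single i 1 + single j 1) 1 := by
    intro i j
    rw [show (MvPowerSeries.X i : MvPowerSeries (Fin n) k)
        = MvPowerSeries.monomial (single i 1) 1 from rfl,
      show (MvPowerSeries.X j : MvPowerSeries (Fin n) k)
        = MvPowerSeries.monomial (single j 1) 1 from rfl,
      MvPowerSeries.monomial_mul_monomial, one_mul]
  have hcoeffq : ∀ d : Finsupp (Fin n) ℕ, MvPowerSeries.coeff d q =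
      ∑ i : Fin n, ∑ j : Fin n,
        (if d = single i 1 + single j 1 then (2 : k)⁻¹ * Hg i j else 0) := by
    intro d
    rw [hqdef, map_sum]
    apply Finset.sum_congr rfl
    intro i _
    rw [map_sum]
    apply Finset.sum_congr rfl
    intro j _
    rw [MvPowerSeries.coeff_C_mul, hXX, MvPowerSeries.coeff_monomial]
    split <;> simp
  -- q agrees with g in degrees ≤ 2
  have hq0 : ∀ d : Finsupp (Fin n) ℕ, degree d < 2 → MvPowerSeries.coeff d q = 0 := by
    intro d hd
    rw [hcoeffq]
    apply Finset.sum_eq_zero; intro i _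
    apply Finset.sum_eq_zero; intro j _
    rw [if_neg]
    intro hc
    rw [hc, degree_add, Finsupp.degree_single, Finsupp.degree_single] at hd
    omega
  have hq2 : ∀ a b : Fin n, MvPowerSeries.coeff (single a 1 + single b 1) q =
      MvPowerSeries.coeff (single a 1 + single b 1) g := by
    intro a b
    rw [hcoeffq]
    rcases eq_or_ne a b with rfl | hab
    · rw [double_sum_indicator_diag (fun i j => (2 : k)⁻¹ * Hg i j) a, hHg]
      simp only [Matrix.of_apply, if_pos rfl, ↓reduceIte]
      field_simp
    · rw [double_sum_indicator (fun i j => (2 : k)⁻¹ * Hg i j) hab, hHg]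
      simp only [Matrix.of_apply, if_neg hab, if_neg (Ne.symm hab), one_mul]
      rw [add_comm (single b 1) (single a 1)]
      field_simp
      ring
  -- g - q lies in the cube of the maximal ideal
  have hmem3 : g - q ∈ (RingHom.ker (MvPowerSeries.constantCoeff (σ := Fin n) (R := k))) ^ 3 := by
    apply mem_pow_of_vanish
    intro d hd
    rw [map_sub, sub_eq_zero]
    have : degree d = 0 ∨ degree d = 1 ∨ degree d = 2 := by omega
    rcases this with h1 | h1 | h1
    · rw [(degree_eq_zero_iff d).mp h1, MvPowerSeries.coeff_zero_eq_constantCoeff_apply, hg0]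
      exact (hq0 0 (by rw [map_zero]; omega)).symm
    · obtain ⟨a, rfl⟩ := eq_single_of_degree_one h1
      rw [hdg0 a, hq0 _ (by rw [Finsupp.degree_single]; omega)]
    · obtain ⟨a, b, rfl⟩ := eq_pair_of_degree_two h1
      exact (hq2 a b).symm
  have hφgq : ∀ d : Finsupp (Fin n) ℕ, degree d < 3 →
      MvPowerSeries.coeff d (φ g) = MvPowerSeries.coeff d (φ q) := by
    intro d hd
    have h0 : MvPowerSeries.coeff d (φ (g - q)) = 0 :=
      vanish_of_mem_pow (map_ker_pow φ 3 hmem3) hd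
    rw [map_sub, map_sub] at h0
    exact sub_eq_zero.mp h0
  -- expansion of φ q
  have hφC : ∀ c : k, φ ((MvPowerSeries.C (σ := Fin n) (R := k)) c) = (MvPowerSeries.C (σ := Fin n) (R := k)) c := by
    intro c
    have h1 : (algebraMap k (MvPowerSeries (Fin n) k)) c = MvPowerSeries.C (σ := Fin n) (R := k) c := by
      rw [MvPowerSeries.algebraMap_apply]; simp
    rw [← h1, AlgEquiv.commutes]
  have hφq : φ q = ∑ i : Fin n, ∑ j : Fin n,
      (MvPowerSeries.C (σ := Fin n) (R := k) ((2 : k)⁻¹ * Hg i j)) *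
        (φ (MvPowerSeries.X i) * φ (MvPowerSeries.X j)) := by
    rw [hqdef, map_sum]
    apply Finset.sum_congr rfl
    intro i _
    rw [map_sum]
    apply Finset.sum_congr rfl
    intro j _
    simp only [map_mul, hφC]
  -- symmetry of Hg
  have hsymm : ∀ i j : Fin n, Hg i j = Hg j i := by
    intro i j
    rw [hHg]
    simp only [Matrix.of_apply]
    rw [add_comm (single i 1) (single j 1)]
    rcases eq_or_ne i j with rfl | hij
    · rfl
    · rw [if_neg hij, if_neg (Ne.symm hij)]
  -- the key entrywise identity
  have key : ∀ a b : Fin n, Hf a b =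
      u0 * ∑ i : Fin n, ∑ j : Fin n, Hg i j * (Dφ0 i a * Dφ0 j b) := by
    intro a b
    have hd2 : degree (single a 1 + single b 1) = 2 := by
      rw [degree_add, Finsupp.degree_single, Finsupp.degree_single]
    have e1 : MvPowerSeries.coeff (single a 1 + single b 1) f =
        u0 * MvPowerSeries.coeff (single a 1 + single b 1) (φ g) := by
      rw [hfu]
      exact coeff_unit_mul u (φ g) hφg_vanish _ hd2
    have e2 := hφgq (single a 1 + single b 1) (by omega)
    -- weighted coefficient of φ q
    have e3 : (if a = b then (2 : k) else 1) *
        MvPowerSeries.coeff (single a 1 + single b 1) (φ q) =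
      ∑ i : Fin n, ∑ j : Fin n, ((2 : k)⁻¹ * Hg i j) *
        (Dφ0 i a * Dφ0 j b + Dφ0 i b * Dφ0 j a) := by
      rw [hφq, map_sum, Finset.mul_sum]
      apply Finset.sum_congr rfl
      intro i _
      rw [map_sum, Finset.mul_sum]
      apply Finset.sum_congr rfl
      intro j _
      rw [MvPowerSeries.coeff_C_mul, mul_left_comm]
      congr 1
      rw [coeff_two_mul _ _ (hφ0 i) (hφ0 j) a b, hA, hA, hA, hA]
    have e4 : ∑ i : Fin n, ∑ j : Fin n, ((2 : k)⁻¹ * Hg i j) *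
        (Dφ0 i a * Dφ0 j b + Dφ0 i b * Dφ0 j a) =
      ∑ i : Fin n, ∑ j : Fin n, Hg i j * (Dφ0 i a * Dφ0 j b) := by
      have swap : ∑ i : Fin n, ∑ j : Fin n, ((2 : k)⁻¹ * Hg i j) * (Dφ0 i b * Dφ0 j a) =
          ∑ i : Fin n, ∑ j : Fin n, ((2 : k)⁻¹ * Hg i j) * (Dφ0 i a * Dφ0 j b) := by
        rw [Finset.sum_comm]
        apply Finset.sum_congr rfl; intro i _
        apply Finset.sum_congr rfl; intro j _
        rw [hsymm j i]; ring
      calc ∑ i : Fin n, ∑ j : Fin n, ((2 : k)⁻¹ * Hg i j) *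
            (Dφ0 i a * Dφ0 j b + Dφ0 i b * Dφ0 j a)
          = (∑ i : Fin n, ∑ j : Fin n, ((2 : k)⁻¹ * Hg i j) * (Dφ0 i a * Dφ0 j b)) +
            ∑ i : Fin n, ∑ j : Fin n, ((2 : k)⁻¹ * Hg i j) * (Dφ0 i b * Dφ0 j a) := by
            simp [mul_add, Finset.sum_add_distrib]
        _ = (∑ i : Fin n, ∑ j : Fin n, ((2 : k)⁻¹ * Hg i j) * (Dφ0 i a * Dφ0 j b)) +
            ∑ i : Fin n, ∑ j : Fin n, ((2 : k)⁻¹ * Hg i j) * (Dφ0 i a * Dφ0 j b) := by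
            rw [swap]
        _ = ∑ i : Fin n, ∑ j : Fin n, Hg i j * (Dφ0 i a * Dφ0 j b) := by
            rw [← Finset.sum_add_distrib]
            apply Finset.sum_congr rfl; intro i _
            rw [← Finset.sum_add_distrib]
            apply Finset.sum_congr rfl; intro j _
            field_simp
            ring
    rw [hHf]
    simp only [Matrix.of_apply]
    rw [e1, e2, mul_left_comm, e3, e4]
  -- matrix identity and determinants
  have hmat : Hf = u0 • (Dφ0.transpose * Hg * Dφ0) := by
    ext a b
    rw [key a b, Matrix.smul_apply, smul_eq_mul]
    congr 1
    rw [Matrix.mul_apply]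
    simp_rw [Matrix.mul_apply, Matrix.transpose_apply, Finset.sum_mul]
    rw [Finset.sum_comm]
    apply Finset.sum_congr rfl; intro i _
    apply Finset.sum_congr rfl; intro j _
    ring
  have hdet : Hf.det = u0 ^ n * Dφ0.det ^ 2 * Hg.det := by
    rw [hmat, Matrix.det_smul, Matrix.det_mul, Matrix.det_mul, Matrix.det_transpose,
      Fintype.card_fin]
    ring
  refine ⟨hdet, ?_⟩
  obtain ⟨m, hm⟩ := hn
  have hpow0 : u0 ^ n = u0 ^ m * u0 ^ m := by rw [hm, pow_add]
  have hpow : u0 ^ n * Dφ0.det ^ 2 = (u0 ^ m * Dφ0.det) ^ 2 := by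
    rw [hpow0]; ring
  refine ⟨u0 ^ m * Dφ0.det, ?_, ?_⟩
  · intro hc
    apply hfnode
    rw [hdet, hpow, hc]
    ring
  · rw [hdet, hpow]
end
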